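/- Suppose d ∈ (−1,0), ω ∈ ℝ, g ≠ 0 and κ, γ > 0, and let (A, S, D) be a solution of the Maxwell–Bloch equations on [0,∞). Then for all t ≥ 0, 4|d| |A(t)|² + 4|S(t)|² + (D(t) − d)² ≤ exp( −2t · min{κ, γ} ) · ( 4|d| |A(0)|² + 4|S(0)|² + (D(0) − d)² ). -/

import Mathlib

/-!
Along a solution, the weights `4|d|`, `4`, `1` in
`V = 4|d|‖A‖² + 4‖S‖² + (D - d)²` make the coupling terms of `V'` add up to
`8 g (|d| + d) Re(conj A · S)`, which vanishes for `d ≤ 0`. What is left,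
`V' = -8|d|κ‖A‖² - 8γ‖S‖² - 4γ(D - d)²`, is at most `-2 min(κ, γ) V`, and Grönwall's
inequality gives the exponential decay.
-/

open Real

theorem le_exp_mul_of_hasDerivAt_le_mul {V V' : ℝ → ℝ} {c : ℝ}
    (hV : ∀ t ≥ (0 : ℝ), HasDerivAt V (V' t) t) (hle : ∀ t ≥ (0 : ℝ), V' t ≤ -c * V t) :
    ∀ t ≥ (0 : ℝ), V t ≤ exp (-c * t) * V 0 := by
  intro t ht
  have h := le_gronwallBound_of_liminf_deriv_right_le (δ := V 0) (K := -c) (ε := 0) (b := t)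
    (fun x hx => (hV x hx.1).continuousAt.continuousWithinAt)
    (fun x hx _ hr => (hV x hx.1).hasDerivWithinAt.liminf_right_slope_le hr)
    le_rfl (fun x hx => by simpa using hle x hx.1) t ⟨ht, le_rfl⟩
  rwa [gronwallBound_ε0, sub_zero, mul_comm] at h

noncomputable def maxwellBlochEnergy (d : ℝ) (A S : ℝ → ℂ) (D : ℝ → ℝ) (t : ℝ) : ℝ :=
  4 * |d| * ‖A t‖ ^ 2 + 4 * ‖S t‖ ^ 2 + (D t - d) ^ 2

section MaxwellBlochEnergy

variable {ω g κ γ d t : ℝ} {A S : ℝ → ℂ} {D : ℝ → ℝ}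

theorem hasDerivAt_maxwellBlochEnergy (hd : d ≤ 0)
    (hA : HasDerivAt A (-((κ : ℂ) + (ω : ℂ) * Complex.I) * A t + (g : ℂ) * S t) t)
    (hS : HasDerivAt S (-((γ : ℂ) + (ω : ℂ) * Complex.I) * S t + (g : ℂ) * A t * (D t : ℂ)) t)
    (hD : HasDerivAt D (-4 * g * ((starRingEnd ℂ) (A t) * S t).re - 2 * γ * (D t - d)) t) :
    HasDerivAt (maxwellBlochEnergy d A S D)
      (-8 * |d| * κ * ‖A t‖ ^ 2 - 8 * γ * ‖S t‖ ^ 2 - 4 * γ * (D t - d) ^ 2) t := by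
  refine (((hA.norm_sq.const_mul (4 * |d|)).add (hS.norm_sq.const_mul 4)).add
    ((hD.sub_const d).pow 2)).congr_deriv ?_
  simp only [Complex.inner, Complex.sq_norm, Complex.normSq_apply, Complex.mul_re, Complex.mul_im,
    Complex.conj_re, Complex.conj_im, Complex.add_re, Complex.add_im, Complex.neg_re,
    Complex.neg_im, Complex.ofReal_re, Complex.ofReal_im, Complex.I_re, Complex.I_im,
    abs_of_nonpos hd]
  ring

theorem maxwellBlochEnergy_deriv_le (hγ : 0 ≤ γ) :
    -8 * |d| * κ * ‖A t‖ ^ 2 - 8 * γ * ‖S t‖ ^ 2 - 4 * γ * (D t - d) ^ 2 ≤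
      -(2 * min κ γ) * maxwellBlochEnergy d A S D t := by
  have hmκ := min_le_left κ γ
  have hmγ := min_le_right κ γ
  unfold maxwellBlochEnergy
  nlinarith [mul_nonneg (mul_nonneg (abs_nonneg d) (sub_nonneg.2 hmκ)) (sq_nonneg ‖A t‖),
    mul_nonneg (sub_nonneg.2 hmγ) (sq_nonneg ‖S t‖),
    mul_nonneg (sub_nonneg.2 hmγ) (sq_nonneg (D t - d)), mul_nonneg hγ (sq_nonneg (D t - d))]

end MaxwellBlochEnergy

theorem maxwell_bloch_lyapunov_estimate_neg_d
    (ω g κ γ d : ℝ) (hγ : 0 < γ)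
    (hd1 : d < 0)
    (A S : ℝ → ℂ) (D : ℝ → ℝ)
    (hA : ∀ t ≥ (0 : ℝ),
      HasDerivAt A (-((κ : ℂ) + (ω : ℂ) * Complex.I) * A t + (g : ℂ) * S t) t)
    (hS : ∀ t ≥ (0 : ℝ),
      HasDerivAt S (-((γ : ℂ) + (ω : ℂ) * Complex.I) * S t + (g : ℂ) * A t * (D t : ℂ)) t)
    (hD : ∀ t ≥ (0 : ℝ),
      HasDerivAt D (-4 * g * ((starRingEnd ℂ) (A t) * S t).re - 2 * γ * (D t - d)) t) :
    ∀ t ≥ (0 : ℝ),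
      4 * |d| * ‖A t‖ ^ 2 + 4 * ‖S t‖ ^ 2 + (D t - d) ^ 2 ≤
        Real.exp (-2 * t * min κ γ) *
          (4 * |d| * ‖A 0‖ ^ 2 + 4 * ‖S 0‖ ^ 2 + (D 0 - d) ^ 2) := by
  intro t ht
  have decay := le_exp_mul_of_hasDerivAt_le_mul
    (fun s hs => hasDerivAt_maxwellBlochEnergy hd1.le (hA s hs) (hS s hs) (hD s hs))
    (fun _ _ => maxwellBlochEnergy_deriv_le hγ.le) t ht
  rwa [show -(2 * min κ γ) * t = -2 * t * min κ γ by ring] at decay
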